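/- If y ≺ x in the majorization order on ℝⁿ, then there exists a doubly stochastic matrix D such that y = D x. -/

import Mathlib

open Finset Matrix

/-- The nonincreasing rearrangement of a finite tuple of reals. -/
noncomputable def decSort {n : ℕ} (x : Fin n → ℝ) : Fin n → ℝ :=
  x ∘ Tuple.sort (fun i => -x i)

/-- Sum of the first `k` entries of a tuple. -/
def pSum {n : ℕ} (x : Fin n → ℝ) (k : ℕ) : ℝ :=
  ∑ i ∈ Finset.univ.filter (fun i : Fin n => (i : ℕ) < k), x i

/-- `Majorizes x y` means `x ≺ y`: every partial sum of the nonincreasing rearrangement of `x`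
is at most the corresponding one for `y`, with equal total sums. -/
def Majorizes {n : ℕ} (x y : Fin n → ℝ) : Prop :=
  (∀ k : ℕ, k < n → pSum (decSort x) k ≤ pSum (decSort y) k) ∧ (∑ i, x i) = ∑ i, y i

lemma perm_mulVec {n : ℕ} (σ : Equiv.Perm (Fin n)) (v : Fin n → ℝ) :
    (σ.permMatrix ℝ) *ᵥ v = v ∘ σ := by
  ext i
  simp [Matrix.mulVec, dotProduct, PEquiv.toMatrix_apply, Equiv.toPEquiv_apply]

lemma pSum_succ {n : ℕ} (x : Fin n → ℝ) {k : ℕ} (hk : k < n) :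
    pSum x (k + 1) = pSum x k + x ⟨k, hk⟩ := by
  unfold pSum
  rw [show (Finset.univ.filter (fun i : Fin n => (i : ℕ) < k + 1))
      = insert ⟨k, hk⟩ (Finset.univ.filter (fun i : Fin n => (i : ℕ) < k)) by
    ext i
    simp [Nat.lt_succ_iff_lt_or_eq, le_iff_eq_or_lt, Fin.ext_iff, or_comm]]
  rw [Finset.sum_insert (by simp)]
  ring

lemma sorted_hlp : ∀ m : ℕ, ∀ n : ℕ, ∀ u v : Fin n → ℝ, Antitone u → Antitone v →
    (∀ k : ℕ, k < n → pSum v k ≤ pSum u k) → (∑ i, v i) = (∑ i, u i) →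
    (Finset.univ.filter (fun i => v i ≠ u i)).card ≤ m →
    ∃ D ∈ doublyStochastic ℝ (Fin n), v = D *ᵥ u := by
  intro m
  induction m with
  | zero =>
    intro n u v _ _ _ _ hcard
    have hemp : (Finset.univ.filter (fun i => v i ≠ u i)) = ∅ :=
      Finset.card_eq_zero.1 (Nat.le_zero.1 hcard)
    have : v = u := by
      funext i
      by_contra hne
      have : i ∈ (Finset.univ.filter (fun i => v i ≠ u i)) := by simp [hne]
      simp [hemp] at this
    exact ⟨1, one_mem _, by simp [this]⟩
  | succ m ih =>
    intro n u v hu hv hps hsum hcard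
    by_cases hvu : v = u
    · exact ⟨1, one_mem _, by simp [hvu]⟩
    -- find j : largest index with v j < u j
    have hA : (Finset.univ.filter (fun i : Fin n => v i < u i)).Nonempty := by
      by_contra hcon
      rw [Finset.not_nonempty_iff_eq_empty, Finset.filter_eq_empty_iff] at hcon
      apply hvu
      funext i
      exact ((Finset.sum_eq_sum_iff_of_le
        (fun i _ => not_lt.1 (hcon (Finset.mem_univ i)))).1 hsum.symm i (Finset.mem_univ i)).symm
    set A := Finset.univ.filter (fun i : Fin n => v i < u i) with hAdef
    set j := A.max' hA with hjdef
    have hj : v j < u j := (Finset.mem_filter.1 (A.max'_mem hA)).2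
    have hj_max : ∀ i : Fin n, j < i → u i ≤ v i := by
      intro i hi
      by_contra hcon
      exact absurd (A.le_max' i (by simp [hAdef, not_le.1 hcon])) (not_le.2 hi)
    -- partial sum difference = tail sum
    have key : ∀ M : ℕ, ∑ i ∈ Finset.univ.filter (fun i : Fin n => ¬ (i : ℕ) < M),
        (v i - u i) = pSum u M - pSum v M := by
      intro M
      have h1 := Finset.sum_filter_add_sum_filter_not Finset.univ
        (fun i : Fin n => (i : ℕ) < M) (fun i => v i - u i)
      rw [Finset.sum_sub_distrib, Finset.sum_sub_distrib, Finset.sum_sub_distrib] at h1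
      have : pSum v M - pSum u M + (∑ i ∈ Finset.univ.filter (fun i : Fin n => ¬ (i : ℕ) < M), v i
          - ∑ i ∈ Finset.univ.filter (fun i : Fin n => ¬ (i : ℕ) < M), u i) = 0 := by
        rw [show pSum v M - pSum u M = _ from rfl] at *
        unfold pSum
        linarith [h1, hsum]
      rw [Finset.sum_sub_distrib]
      unfold pSum
      linarith
    -- find k : smallest index > j with u k < v k
    have hBpos : 0 < ∑ i ∈ Finset.univ.filter (fun i : Fin n => ¬ (i : ℕ) < (j : ℕ) + 1),
        (v i - u i) := by
      rw [key]
      have h1 : pSum v ((j : ℕ) + 1) = pSum v (j : ℕ) + v j := by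
        rw [pSum_succ v j.2]
      have h2 : pSum u ((j : ℕ) + 1) = pSum u (j : ℕ) + u j := by
        rw [pSum_succ u j.2]
      have h3 := hps (j : ℕ) j.2
      linarith
    have hB : (Finset.univ.filter (fun i : Fin n => (j : ℕ) < (i : ℕ) ∧ u i < v i)).Nonempty := by
      by_contra hcon
      rw [Finset.not_nonempty_iff_eq_empty, Finset.filter_eq_empty_iff] at hcon
      have : ∑ i ∈ Finset.univ.filter (fun i : Fin n => ¬ (i : ℕ) < (j : ℕ) + 1),
          (v i - u i) ≤ 0 := by
        apply Finset.sum_nonpos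
        intro i hi
        simp only [Finset.mem_filter, Finset.mem_univ, true_and, not_lt] at hi
        have h1 : (j : ℕ) < (i : ℕ) := by omega
        have := hcon (Finset.mem_univ i)
        simp only [h1, true_and, not_lt] at this
        linarith
      linarith
    set B := Finset.univ.filter (fun i : Fin n => (j : ℕ) < (i : ℕ) ∧ u i < v i) with hBdef
    set k := B.min' hB with hkdef
    have hkB := Finset.mem_filter.1 (B.min'_mem hB)
    have hk1 : (j : ℕ) < (k : ℕ) := hkB.2.1
    have hk2 : u k < v k := hkB.2.2
    have hjk : j < k := hk1
    have hmid : ∀ i : Fin n, (j : ℕ) < (i : ℕ) → (i : ℕ) < (k : ℕ) → v i = u i := by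
      intro i h1 h2
      refine le_antisymm ?_ (hj_max i (Fin.lt_def.mpr h1))
      by_contra hcon
      exact absurd (B.min'_le i (by
        simp only [hBdef, Finset.mem_filter, Finset.mem_univ, true_and]
        exact ⟨h1, not_le.1 hcon⟩)) (not_le.2 (Fin.lt_def.mpr h2))
    set δ := min (u j - v j) (v k - u k) with hδdef
    have hδ : 0 < δ := lt_min (by linarith) (by linarith)
    have hδa : δ ≤ u j - v j := min_le_left _ _
    have hδb : δ ≤ v k - u k := min_le_right _ _
    have hvjk : v k ≤ v j := hv hjk.le
    have huk : u k < u j := by linarith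
    set u' := Function.update (Function.update u j (u j - δ)) k (u k + δ) with hu'def
    have hu'j : u' j = u j - δ := by
      rw [hu'def, Function.update_of_ne hjk.ne, Function.update_self]
    have hu'k : u' k = u k + δ := by rw [hu'def, Function.update_self]
    have hu'i : ∀ i, i ≠ j → i ≠ k → u' i = u i := by
      intro i h1 h2
      rw [hu'def, Function.update_of_ne h2, Function.update_of_ne h1]
    -- u' is antitone
    have claimA : ∀ b : Fin n, j < b → u' b ≤ v j := by
      intro b hb
      rcases lt_trichotomy b k with h | h | h
      · rw [hu'i b hb.ne' h.ne, ← hmid b (Fin.lt_def.mp hb) (Fin.lt_def.mp h)]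
        exact hv hb.le
      · rw [h, hu'k]; linarith
      · rw [hu'i b hb.ne' h.ne']
        have := hu h.le
        linarith
    have hu' : Antitone u' := by
      intro a b hab
      rcases eq_or_lt_of_le hab with rfl | hab
      · exact le_refl _
      by_cases haj : a = j
      · calc u' b ≤ v j := claimA b (haj ▸ hab)
          _ ≤ u' j := by rw [hu'j]; linarith
          _ = u' a := by rw [haj]
      by_cases hbj : b = j
      · have hajlt : a < j := hbj ▸ hab
        have hak : a ≠ k := ne_of_lt (hajlt.trans hjk)
        rw [hbj, hu'j, hu'i a haj hak]
        have := hu hajlt.le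
        linarith
      by_cases hak : a = k
      · have hkb : k < b := hak ▸ hab
        have hbj' : b ≠ j := ne_of_gt (hjk.trans hkb)
        rw [hak, hu'k, hu'i b hbj' (ne_of_gt hkb)]
        have := hu hkb.le
        linarith
      by_cases hbk : b = k
      · have hakt : a < k := hbk ▸ hab
        rw [hbk, hu'k, hu'i a haj hak]
        rcases lt_or_gt_of_ne (haj : a ≠ j) with h | h
        · have := hu h.le
          linarith
        · rw [← hmid a (Fin.lt_def.mp h) (Fin.lt_def.mp hakt)]
          linarith [hv hakt.le]
      · rw [hu'i a haj hak, hu'i b hbj hbk]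
        exact hu hab.le
    -- sum of u' over any finset
    have hupd : ∀ i, u' i = u i + ((if i = j then -δ else 0) + (if i = k then δ else 0)) := by
      intro i
      by_cases h1 : i = j
      · subst h1; rw [hu'j]; simp [hjk.ne, sub_eq_add_neg]
      by_cases h2 : i = k
      · subst h2; rw [hu'k]; simp [hjk.ne']
      · rw [hu'i i h1 h2]; simp [h1, h2]
    have hupdate_sum : ∀ s : Finset (Fin n), ∑ i ∈ s, u' i =
        (∑ i ∈ s, u i) + (if j ∈ s then -δ else 0) + (if k ∈ s then δ else 0) := by
      intro s
      simp_rw [hupd, Finset.sum_add_distrib]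
      rw [Finset.sum_ite_eq' s j (fun _ => -δ), Finset.sum_ite_eq' s k (fun _ => δ)]
      ring
    -- new partial sum conditions
    have hps' : ∀ M : ℕ, M < n → pSum v M ≤ pSum u' M := by
      intro M hM
      have hs := hupdate_sum (Finset.univ.filter (fun i : Fin n => (i : ℕ) < M))
      have hjmem : j ∈ Finset.univ.filter (fun i : Fin n => (i : ℕ) < M) ↔ (j : ℕ) < M := by simp
      have hkmem : k ∈ Finset.univ.filter (fun i : Fin n => (i : ℕ) < M) ↔ (k : ℕ) < M := by simp
      rcases le_or_gt M (j : ℕ) with h1 | h1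
      · rw [show pSum u' M = _ from rfl]
        unfold pSum
        rw [hs, if_neg (by simp; omega), if_neg (by simp; omega)]
        have := hps M hM
        unfold pSum at this
        linarith
      rcases le_or_gt M (k : ℕ) with h2 | h2
      · -- j < M ≤ k : pSum u' M = pSum u M - δ, and gap ≥ δ
        have hgap : δ ≤ pSum u M - pSum v M := by
          rw [← key M]
          have hkmem2 : k ∈ Finset.univ.filter (fun i : Fin n => ¬ (i : ℕ) < M) := by
            simp; omega
          have hterm : ∀ i ∈ Finset.univ.filter (fun i : Fin n => ¬ (i : ℕ) < M),
              0 ≤ v i - u i := by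
            intro i hi
            simp only [Finset.mem_filter, Finset.mem_univ, true_and, not_lt] at hi
            have : j < i := show (j : ℕ) < (i : ℕ) by omega
            linarith [hj_max i this]
          calc δ ≤ v k - u k := hδb
            _ ≤ _ := Finset.single_le_sum hterm hkmem2
        rw [show pSum u' M = _ from rfl]
        unfold pSum
        rw [hs, if_pos (by simp; omega), if_neg (by simp; omega)]
        unfold pSum at hgap
        linarith
      · rw [show pSum u' M = _ from rfl]
        unfold pSum
        rw [hs, if_pos (by simp; omega), if_pos (by simp; omega)]
        have := hps M hM
        unfold pSum at this
        linarith
    have hsum' : (∑ i, v i) = ∑ i, u' i := by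
      rw [hupdate_sum Finset.univ, if_pos (Finset.mem_univ _), if_pos (Finset.mem_univ _)]
      linarith
    -- cardinality decreases
    have hjS : j ∈ Finset.univ.filter (fun i => v i ≠ u i) := by simp [hj.ne]
    have hkS : k ∈ Finset.univ.filter (fun i => v i ≠ u i) := by simp [hk2.ne']
    have hcard' : (Finset.univ.filter (fun i => v i ≠ u' i)).card ≤ m := by
      rcases min_choice (u j - v j) (v k - u k) with hc | hc
      · have hvej : u' j = v j := by rw [hu'j, hδdef, hc]; ring
        have hsub : Finset.univ.filter (fun i => v i ≠ u' i) ⊆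
            (Finset.univ.filter (fun i => v i ≠ u i)).erase j := by
          intro i hi
          simp only [Finset.mem_filter, Finset.mem_univ, true_and, Finset.mem_erase] at hi ⊢
          have hij : i ≠ j := by rintro rfl; exact hi hvej.symm
          refine ⟨hij, ?_⟩
          by_cases hik : i = k
          · subst hik; exact hk2.ne'
          · rw [← hu'i i hij hik]; exact hi
        calc (Finset.univ.filter (fun i => v i ≠ u' i)).card
            ≤ ((Finset.univ.filter (fun i => v i ≠ u i)).erase j).card := Finset.card_le_card hsub
          _ = (Finset.univ.filter (fun i => v i ≠ u i)).card - 1 :=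
            Finset.card_erase_of_mem hjS
          _ ≤ m := by omega
      · have hvek : u' k = v k := by rw [hu'k, hδdef, hc]; ring
        have hsub : Finset.univ.filter (fun i => v i ≠ u' i) ⊆
            (Finset.univ.filter (fun i => v i ≠ u i)).erase k := by
          intro i hi
          simp only [Finset.mem_filter, Finset.mem_univ, true_and, Finset.mem_erase] at hi ⊢
          have hik : i ≠ k := by rintro rfl; exact hi hvek.symm
          refine ⟨hik, ?_⟩
          by_cases hij : i = j
          · subst hij; exact hj.ne
          · rw [← hu'i i hij hik]; exact hi
        calc (Finset.univ.filter (fun i => v i ≠ u' i)).card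
            ≤ ((Finset.univ.filter (fun i => v i ≠ u i)).erase k).card := Finset.card_le_card hsub
          _ = (Finset.univ.filter (fun i => v i ≠ u i)).card - 1 :=
            Finset.card_erase_of_mem hkS
          _ ≤ m := by omega
    obtain ⟨E, hE, hvE⟩ := ih n u' v hu' hv hps' hsum' hcard'
    -- T-transform
    have hd : 0 < u j - u k := by linarith
    set t := δ / (u j - u k) with htdef
    have ht0 : 0 ≤ t := div_nonneg hδ.le hd.le
    have ht1 : t ≤ 1 := (div_le_one hd).2 (by linarith)
    have htδ : t * (u j - u k) = δ := div_mul_cancel₀ _ hd.ne'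
    set T := (1 - t) • (1 : Matrix (Fin n) (Fin n) ℝ) + t • ((Equiv.swap j k).permMatrix ℝ)
      with hTdef
    have hT : T ∈ doublyStochastic ℝ (Fin n) :=
      convex_doublyStochastic (one_mem _) permMatrix_mem_doublyStochastic
        (by linarith) ht0 (by ring)
    have hTu : T *ᵥ u = u' := by
      rw [hTdef, Matrix.add_mulVec, Matrix.smul_mulVec, Matrix.smul_mulVec,
        Matrix.one_mulVec, perm_mulVec]
      funext i
      simp only [Pi.add_apply, Pi.smul_apply, Function.comp_apply, smul_eq_mul]
      by_cases h1 : i = j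
      · subst h1; rw [Equiv.swap_apply_left, hu'j]; nlinarith [htδ]
      by_cases h2 : i = k
      · subst h2; rw [Equiv.swap_apply_right, hu'k]; nlinarith [htδ]
      · rw [Equiv.swap_apply_of_ne_of_ne h1 h2, hu'i i h1 h2]; ring
    exact ⟨E * T, mul_mem hE hT, by rw [← Matrix.mulVec_mulVec, hTu]; exact hvE⟩

lemma antitone_decSort {n : ℕ} (x : Fin n → ℝ) : Antitone (decSort x) := by
  intro a b hab
  have := Tuple.monotone_sort (fun i => -x i) hab
  simp only [Function.comp_apply] at this
  simp only [decSort, Function.comp_apply]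
  linarith

lemma sum_decSort {n : ℕ} (x : Fin n → ℝ) : ∑ i, decSort x i = ∑ i, x i :=
  Equiv.sum_comp (Tuple.sort (fun i => -x i)) x

/-- Hardy–Littlewood–Pólya: if `y ≺ x` then `y = D x` for some doubly stochastic `D`. -/
theorem exists_doublyStochastic_of_majorizes (n : ℕ) (x y : Fin n → ℝ)
    (h : Majorizes y x) :
    ∃ D : Matrix (Fin n) (Fin n) ℝ,
      (∀ i j, 0 ≤ D i j) ∧ (∀ i, ∑ j, D i j = 1) ∧ (∀ j, ∑ i, D i j = 1) ∧
        y = D.mulVec x := by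
  have h2 : ∑ i, decSort y i = ∑ i, decSort x i := by
    rw [sum_decSort, sum_decSort, h.2]
  obtain ⟨D, hD, hDx⟩ := sorted_hlp (Finset.univ.filter
      (fun i => decSort y i ≠ decSort x i)).card n (decSort x) (decSort y)
    (antitone_decSort x) (antitone_decSort y) h.1 h2 le_rfl
  set σ := Tuple.sort (fun i => -x i) with hσ
  set τ := Tuple.sort (fun i => -y i) with hτ
  have hx : decSort x = (σ.permMatrix ℝ) *ᵥ x := (perm_mulVec σ x).symm
  have hy : y = (τ⁻¹.permMatrix ℝ) *ᵥ decSort y := by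
    rw [perm_mulVec]
    funext i
    simp [decSort, hτ]
  refine ⟨τ⁻¹.permMatrix ℝ * D * σ.permMatrix ℝ, ?_, ?_, ?_, ?_⟩
  · exact fun i j => nonneg_of_mem_doublyStochastic
      (mul_mem (mul_mem permMatrix_mem_doublyStochastic hD) permMatrix_mem_doublyStochastic)
  · exact sum_row_of_mem_doublyStochastic
      (mul_mem (mul_mem permMatrix_mem_doublyStochastic hD) permMatrix_mem_doublyStochastic)
  · exact sum_col_of_mem_doublyStochastic
      (mul_mem (mul_mem permMatrix_mem_doublyStochastic hD) permMatrix_mem_doublyStochastic)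
  · show y = _ *ᵥ x
    rw [← Matrix.mulVec_mulVec, ← Matrix.mulVec_mulVec, ← hx, ← hDx, ← hy]
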